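/- Let p ≥ 1 and let Σ be a real symmetric positive definite p × p matrix whose inverse Σ⁻¹ is tridiagonal. Then for all indices i ≤ j, Σ_{i,j} = Σ_{i,i} · ∏_{l=i}^{j−1} ( Σ_{l,l+1} / Σ_{l,l} ), with the empty product equal to 1. -/

import Mathlib

/-- The regression coefficient `Σ_{l,l+1} / Σ_{l,l}` of a matrix `Σ`
(0-based indices), with junk value `0` when out of range. -/
noncomputable def regressionStep {p : ℕ} (S : Matrix (Fin p) (Fin p) ℝ) (l : ℕ) : ℝ :=
  if h : l + 1 < p then
    S ⟨l, Nat.lt_of_succ_lt h⟩ ⟨l + 1, h⟩ / S ⟨l, Nat.lt_of_succ_lt h⟩ ⟨l, Nat.lt_of_succ_lt h⟩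
  else 0

/-!
Let `Ω = Σ⁻¹` and `a + 1 < p`. Truncate the vector `Σ_{·,a+1} Σ_{a,a} - Σ_{·,a} Σ_{a,a+1}` to the
indices `m ≤ a`; call it `u`. Its `a`-th entry vanishes, and since `Ω` is tridiagonal, `Ω u` is
supported on `{a}`: above `a` the truncation is invisible to `Ω` and `Ω Σ = 1`, below `a` only
`Ω_{a+1,a} u_a = 0` could contribute. So `u = Σ (Ω u)` is a multiple of the column `Σ_{·,a}`,
and `u_a = 0 ≠ Σ_{a,a}` forces `u = 0`, i.e. `Σ_{i,a+1} = Σ_{i,a} Σ_{a,a+1} / Σ_{a,a}` for `i ≤ a`.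
Iterating this in `j` gives the product formula.
-/
namespace Matrix

section IsTridiagonal

variable {α : Type*} [Zero α] {p : ℕ}

def IsTridiagonal (Ω : Matrix (Fin p) (Fin p) α) : Prop :=
  ∀ j k : Fin p, 2 ≤ |(j : ℤ) - (k : ℤ)| → Ω j k = 0

variable {Ω : Matrix (Fin p) (Fin p) α}

theorem IsTridiagonal.apply_eq_zero_of_add_one_lt (hΩ : Ω.IsTridiagonal) {j k : Fin p}
    (hjk : (j : ℕ) + 1 < k) : Ω j k = 0 :=
  hΩ j k (by rw [le_abs]; omega)

theorem IsTridiagonal.apply_eq_zero_of_add_one_lt' (hΩ : Ω.IsTridiagonal) {j k : Fin p}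
    (hkj : (k : ℕ) + 1 < j) : Ω j k = 0 :=
  hΩ j k (by rw [le_abs]; omega)

end IsTridiagonal

variable {K : Type*} [Field K]

theorem eq_zero_of_inv_mulVec_apply_eq_zero {ι : Type*} [Fintype ι] [DecidableEq ι]
    {A : Matrix ι ι K} (hA : IsUnit A.det) {u : ι → K} {c : ι}
    (hu : ∀ m ≠ c, (A⁻¹ *ᵥ u) m = 0) (huc : u c = 0) (hc : A c c ≠ 0) : u = 0 := by
  set a := (A⁻¹ *ᵥ u) c
  have hsingle : A⁻¹ *ᵥ u = Pi.single c a := by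
    ext m
    by_cases hm : m = c
    · subst hm; simp [a]
    · simp [hm, hu m hm]
  have hcol : u = fun m => A m c * a := by
    calc u = A *ᵥ (A⁻¹ *ᵥ u) := by rw [mulVec_mulVec, mul_nonsing_inv _ hA, one_mulVec]
      _ = fun m => A m c * a := by rw [hsingle, mulVec_single]; ext m; simp
  have ha : a = 0 := by
    simpa [huc, hc] using (congrFun hcol c).symm
  ext m
  rw [congrFun hcol m, ha, mul_zero, Pi.zero_apply]

theorem apply_mul_apply_diag_eq_of_isTridiagonal_inv {p : ℕ} {S : Matrix (Fin p) (Fin p) K}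
    (hS : IsUnit S.det) (htri : S⁻¹.IsTridiagonal) {i a b : Fin p} (hia : i ≤ a)
    (hab : (a : ℕ) + 1 = b) (ha : S a a ≠ 0) : S i b * S a a = S i a * S a b := by
  set u : Fin p → K := fun m => if m ≤ a then S m b * S a a - S m a * S a b else 0
  have hua : u a = 0 := by simp [u, mul_comm]
  have hΩu : ∀ m ≠ a, (S⁻¹ *ᵥ u) m = 0 := by
    intro m hm
    rcases lt_or_gt_of_ne hm with hma | ham
    · have hsum : (S⁻¹ *ᵥ u) m = (S⁻¹ * S) m b * S a a - (S⁻¹ * S) m a * S a b := by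
        simp only [mulVec, dotProduct, mul_apply, Finset.sum_mul, ← Finset.sum_sub_distrib]
        refine Finset.sum_congr rfl fun k _ => ?_
        by_cases hk : k ≤ a
        · simp only [u, if_pos hk]; ring
        · rw [htri.apply_eq_zero_of_add_one_lt (by simp only [Fin.lt_def, not_le] at *; omega)]
          ring
      rw [hsum, nonsing_inv_mul _ hS, one_apply_ne, one_apply_ne hm]
      · ring
      · exact fun h => by simp only [Fin.lt_def, Fin.ext_iff] at *; omega
    · rw [mulVec, dotProduct]
      refine Finset.sum_eq_zero fun k _ => ?_
      rcases lt_trichotomy k a with hka | rfl | hak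
      · rw [htri.apply_eq_zero_of_add_one_lt' (by simp only [Fin.lt_def] at *; omega), zero_mul]
      · rw [hua, mul_zero]
      · simp [u, not_le.2 hak]
  have hu := congrFun (eq_zero_of_inv_mulVec_apply_eq_zero hS hΩu hua ha) i
  simpa [u, hia, sub_eq_zero] using hu

theorem apply_eq_mul_prod_regressionStep {p : ℕ} {S : Matrix (Fin p) (Fin p) ℝ}
    (hS : IsUnit S.det) (htri : S⁻¹.IsTridiagonal) (hdiag : ∀ a, S a a ≠ 0) {i j : Fin p}
    (hij : i ≤ j) : S i j = S i i * ∏ l ∈ Finset.Ico (i : ℕ) j, regressionStep S l := by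
  obtain ⟨j, hj⟩ := j
  change (i : ℕ) ≤ j at hij
  induction j, hij using Nat.le_induction with
  | base => simp
  | succ n hin ih =>
    have hn : n < p := by omega
    have hstep := apply_mul_apply_diag_eq_of_isTridiagonal_inv hS htri
      (a := ⟨n, hn⟩) (b := ⟨n + 1, hj⟩) hin rfl (hdiag _)
    rw [Finset.prod_Ico_succ_top hin, ← mul_assoc, ← ih hn, regressionStep, dif_pos hj,
      ← mul_div_assoc, eq_div_iff (hdiag _)]
    exact hstep

end Matrix

theorem tridiagonal_inverse_entry_prod_general
    (p : ℕ) (S : Matrix (Fin p) (Fin p) ℝ)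
    (hpd : S.PosDef)
    (htri : ∀ j k : Fin p, 2 ≤ |(j : ℤ) - (k : ℤ)| → S⁻¹ j k = 0) :
    ∀ i j : Fin p, i ≤ j →
      S i j = S i i * ∏ l ∈ Finset.Ico (i : ℕ) (j : ℕ), regressionStep S l := by
  intro i j hij
  exact S.apply_eq_mul_prod_regressionStep hpd.det_pos.ne'.isUnit htri
    (fun _ => hpd.diag_pos.ne') hij

/-- **Product formula for covariances with tridiagonal inverse.**
If `Σ` is a real symmetric positive definite matrix whose inverse is tridiagonal, then for all
indices `i ≤ j`, `Σ_{i,j} = Σ_{i,i} ∏_{l=i}^{j−1} (Σ_{l,l+1}/Σ_{l,l})`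
(with the empty product equal to 1). -/
theorem tridiagonal_inverse_entry_prod
    (p : ℕ) (hp : 1 ≤ p) (S : Matrix (Fin p) (Fin p) ℝ)
    (hpd : S.PosDef)
    (htri : ∀ j k : Fin p, 2 ≤ |(j : ℤ) - (k : ℤ)| → S⁻¹ j k = 0) :
    ∀ i j : Fin p, i ≤ j →
      S i j = S i i * ∏ l ∈ Finset.Ico (i : ℕ) (j : ℕ), regressionStep S l :=
  tridiagonal_inverse_entry_prod_general p S hpd htri
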